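/- Let A₁,…,Aₘ be real n×n matrices that all leave a common proper cone K ⊆ ℝⁿ invariant, and let k ≥ 1. Then (1/m)^{1/k} · ρ(A₁^{⊗k} + ··· + Aₘ^{⊗k})^{1/k} ≤ ρ(A₁,…,Aₘ) ≤ ρ(A₁^{⊗k} + ··· + Aₘ^{⊗k})^{1/k}, where ρ(A₁^{⊗k} + ··· + Aₘ^{⊗k}) is the spectral radius of the single matrix A₁^{⊗k} + ··· + Aₘ^{⊗k}. -/

import Mathlib

set_option maxHeartbeats 1600000
set_option linter.unusedSectionVars false
set_option linter.unusedVariables false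

open scoped Kronecker

/-- The ℓ₂ operator norm of a square real matrix. -/
noncomputable def l2OpNorm {ι : Type*} [Fintype ι] [DecidableEq ι]
    (A : Matrix ι ι ℝ) : ℝ :=
  ‖Matrix.toEuclideanCLM (𝕜 := ℝ) A‖

/-- The product `A_{σ_k} ⋯ A_{σ_1}` associated to the word `σ`. -/
noncomputable def wordProd {ι : Type*} [Fintype ι] [DecidableEq ι] {m k : ℕ}
    (A : Fin m → Matrix ι ι ℝ) (σ : Fin k → Fin m) : Matrix ι ι ℝ :=
  (List.ofFn fun i => A (σ i)).reverse.prod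

/-- The joint spectral radius of `A₁, …, Aₘ` (w.r.t. the ℓ₂ operator norm). -/
noncomputable def jsr {ι : Type*} [Fintype ι] [DecidableEq ι] {m : ℕ}
    (A : Fin m → Matrix ι ι ℝ) : ℝ :=
  Filter.atTop.limsup fun k : ℕ =>
    ⨆ σ : Fin k → Fin m, l2OpNorm (wordProd A σ) ^ ((1 : ℝ) / (k : ℝ))

/-- The spectral radius of a single matrix, `ρ(A) = lim_k ‖A^k‖^{1/k}`. -/
noncomputable def specRad {ι : Type*} [Fintype ι] [DecidableEq ι]
    (A : Matrix ι ι ℝ) : ℝ :=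
  Filter.atTop.limsup fun k : ℕ => l2OpNorm (A ^ k) ^ ((1 : ℝ) / (k : ℝ))

/-- `K ⊆ ℝⁿ` is a proper cone: a closed convex cone with nonempty interior
containing no straight line. -/
def IsProperCone {n : ℕ} (K : Set (Fin n → ℝ)) : Prop :=
  IsClosed K ∧ Convex ℝ K ∧ (∀ c : ℝ, 0 ≤ c → ∀ v ∈ K, c • v ∈ K) ∧
    (interior K).Nonempty ∧ K ∩ (-K) = {0}

/-- The matrix `A` leaves the cone `K` invariant. -/
def LeavesInvariant {n : ℕ} (A : Matrix (Fin n) (Fin n) ℝ)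
    (K : Set (Fin n → ℝ)) : Prop :=
  ∀ v ∈ K, A.mulVec v ∈ K
/-- The `k`-th Kronecker power of a square matrix. -/
noncomputable def kronPow {n : ℕ} (A : Matrix (Fin n) (Fin n) ℝ) :
    (k : ℕ) → Matrix (Fin (n ^ k)) (Fin (n ^ k)) ℝ
  | 0 => 1
  | k + 1 =>
    Matrix.reindex (finProdFinEquiv.trans (finCongr (pow_succ n k).symm))
      (finProdFinEquiv.trans (finCongr (pow_succ n k).symm))
      ((kronPow A k) ⊗ₖ A)


noncomputable def nrm {ι : Type*} [Fintype ι] (v : ι → ℝ) : ℝ :=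
  ‖(WithLp.equiv 2 (ι → ℝ)).symm v‖

def dotp {ι : Type*} [Fintype ι] (v w : ι → ℝ) : ℝ := ∑ i, v i * w i

def tens {a b : Type*} [Fintype a] [Fintype b] (v : a → ℝ) (w : b → ℝ) : a × b → ℝ :=
  fun p => v p.1 * w p.2

noncomputable def tensVec {n : ℕ} : (k : ℕ) → (Fin k → (Fin n → ℝ)) → (Fin (n ^ k) → ℝ)
  | 0, _ => fun _ => 1
  | k + 1, v =>
    (tens (tensVec k fun i => v i.castSucc) (v (Fin.last k))) ∘
      (finProdFinEquiv.trans (finCongr (pow_succ n k).symm)).symm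





section NrmOnly
variable {ι : Type*} [Fintype ι]

lemma nrm_nonneg (v : ι → ℝ) : 0 ≤ nrm v := norm_nonneg _

lemma sq_nrm (v : ι → ℝ) : nrm v ^ 2 = ∑ i, v i ^ 2 := by
  rw [nrm, EuclideanSpace.norm_eq, Real.sq_sqrt (by positivity)]
  simp [sq_abs]

lemma nrm_le_of_sq_le {v : ι → ℝ} {C : ℝ} (hC : 0 ≤ C) (h : nrm v ^ 2 ≤ C ^ 2) :
    nrm v ≤ C := by
  nlinarith [nrm_nonneg v]

end NrmOnly

variable {ι : Type*} [Fintype ι] [DecidableEq ι]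

lemma l2OpNorm_nonneg (A : Matrix ι ι ℝ) : 0 ≤ l2OpNorm A := norm_nonneg _

lemma nrm_mulVec_le (A : Matrix ι ι ℝ) (x : ι → ℝ) :
    nrm (A.mulVec x) ≤ l2OpNorm A * nrm x := by
  have h := (Matrix.toEuclideanCLM (𝕜 := ℝ) A).le_opNorm ((WithLp.equiv 2 (ι → ℝ)).symm x)
  exact h

lemma l2OpNorm_le_bound {A : Matrix ι ι ℝ} {C : ℝ} (hC : 0 ≤ C)
    (h : ∀ x, nrm (A.mulVec x) ≤ C * nrm x) : l2OpNorm A ≤ C := by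
  refine ContinuousLinearMap.opNorm_le_bound _ hC fun y => ?_
  have := h (WithLp.equiv 2 (ι → ℝ) y)
  have hy : (WithLp.equiv 2 (ι → ℝ)).symm (WithLp.equiv 2 (ι → ℝ) y) = y := by simp
  rw [nrm, nrm, hy] at this
  rwa [show (Matrix.toEuclideanCLM (𝕜 := ℝ) A) y =
    (WithLp.equiv 2 (ι → ℝ)).symm (A.mulVec (WithLp.equiv 2 (ι → ℝ) y)) from by
      conv_lhs => rw [← hy]
      rfl]

lemma exists_nrm_lt_mulVec {A : Matrix ι ι ℝ} {r : ℝ} (hr0 : 0 ≤ r)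
    (hr : r < l2OpNorm A) :
    ∃ x, r * nrm x < nrm (A.mulVec x) := by
  obtain ⟨y, hy1, hy2⟩ := (Matrix.toEuclideanCLM (𝕜 := ℝ) A).exists_lt_apply_of_lt_opNorm hr
  refine ⟨WithLp.equiv 2 (ι → ℝ) y, ?_⟩
  have hy' : (WithLp.equiv 2 (ι → ℝ)).symm (WithLp.equiv 2 (ι → ℝ) y) = y := by simp
  rw [nrm, nrm, hy']
  rw [show (WithLp.equiv 2 (ι → ℝ)).symm (A.mulVec (WithLp.equiv 2 (ι → ℝ) y)) =
    (Matrix.toEuclideanCLM (𝕜 := ℝ) A) y from by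
      conv_rhs => rw [← hy']
      rfl]
  calc r * ‖y‖ ≤ r * 1 := by
        exact mul_le_mul_of_nonneg_left hy1.le hr0
    _ = r := mul_one r
    _ < _ := hy2

lemma l2OpNorm_mul_le (A B : Matrix ι ι ℝ) :
    l2OpNorm (A * B) ≤ l2OpNorm A * l2OpNorm B := by
  refine l2OpNorm_le_bound (mul_nonneg (l2OpNorm_nonneg A) (l2OpNorm_nonneg B)) fun x => ?_
  rw [← Matrix.mulVec_mulVec]
  calc nrm (A.mulVec (B.mulVec x)) ≤ l2OpNorm A * nrm (B.mulVec x) := nrm_mulVec_le _ _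
    _ ≤ l2OpNorm A * (l2OpNorm B * nrm x) := by
        exact mul_le_mul_of_nonneg_left (nrm_mulVec_le _ _) (l2OpNorm_nonneg A)
    _ = l2OpNorm A * l2OpNorm B * nrm x := by ring


lemma l2OpNorm_zero {ι : Type*} [Fintype ι] [DecidableEq ι] :
    l2OpNorm (0 : Matrix ι ι ℝ) = 0 := by
  rw [l2OpNorm, map_zero, norm_zero]

lemma l2OpNorm_add_le {ι : Type*} [Fintype ι] [DecidableEq ι] (A B : Matrix ι ι ℝ) :
    l2OpNorm (A + B) ≤ l2OpNorm A + l2OpNorm B := by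
  rw [l2OpNorm, l2OpNorm, l2OpNorm, map_add]
  exact norm_add_le _ _

lemma l2OpNorm_one_le {ι : Type*} [Fintype ι] [DecidableEq ι] :
    l2OpNorm (1 : Matrix ι ι ℝ) ≤ 1 := by
  refine l2OpNorm_le_bound zero_le_one fun x => ?_
  rw [Matrix.one_mulVec, one_mul]





section Tens

variable {a b : Type*} [Fintype a] [Fintype b] [DecidableEq a] [DecidableEq b]



lemma dotp_le_nrm {ι : Type*} [Fintype ι] (v w : ι → ℝ) : dotp v w ≤ nrm v * nrm w := by
  have h := real_inner_le_norm ((WithLp.equiv 2 (ι → ℝ)).symm v) ((WithLp.equiv 2 (ι → ℝ)).symm w)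
  rw [PiLp.inner_apply] at h
  simpa [dotp, nrm, mul_comm] using h

lemma dotp_tens (ψ : a → ℝ) (φ : b → ℝ) (v : a → ℝ) (w : b → ℝ) :
    dotp (tens ψ φ) (tens v w) = dotp ψ v * dotp φ w := by
  simp only [dotp, tens, Fintype.sum_prod_type, Finset.sum_mul_sum]
  congr 1; ext i; congr 1; ext j; ring

lemma sq_nrm_tens (v : a → ℝ) (w : b → ℝ) :
    nrm (tens v w) ^ 2 = nrm v ^ 2 * nrm w ^ 2 := by
  rw [sq_nrm, sq_nrm, sq_nrm, Fintype.sum_prod_type, Finset.sum_mul_sum]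
  exact Finset.sum_congr rfl fun i _ => Finset.sum_congr rfl fun j _ => mul_pow _ _ _
lemma nrm_tens (v : a → ℝ) (w : b → ℝ) : nrm (tens v w) = nrm v * nrm w := by
  have h := sq_nrm_tens v w
  have h1 := nrm_nonneg (tens v w)
  have h2 := nrm_nonneg v
  have h3 := nrm_nonneg w
  calc nrm (tens v w) = Real.sqrt (nrm (tens v w) ^ 2) := (Real.sqrt_sq h1).symm
    _ = Real.sqrt ((nrm v * nrm w) ^ 2) := by rw [h]; ring_nf
    _ = nrm v * nrm w := Real.sqrt_sq (mul_nonneg h2 h3)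

lemma kron_mulVec_tens (A : Matrix a a ℝ) (B : Matrix b b ℝ) (v : a → ℝ) (w : b → ℝ) :
    (A ⊗ₖ B).mulVec (tens v w) = tens (A.mulVec v) (B.mulVec w) := by
  funext p
  obtain ⟨i, j⟩ := p
  simp only [Matrix.mulVec, dotProduct, tens, Fintype.sum_prod_type,
    Matrix.kroneckerMap_apply, Finset.sum_mul_sum]
  exact Finset.sum_congr rfl fun p _ => Finset.sum_congr rfl fun q _ => by ring

lemma l2OpNorm_kron_one_le (A : Matrix a a ℝ) :
    l2OpNorm (A ⊗ₖ (1 : Matrix b b ℝ)) ≤ l2OpNorm A := by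
  refine l2OpNorm_le_bound (l2OpNorm_nonneg A) fun x => ?_
  have key : ∀ p : a × b, ((A ⊗ₖ (1 : Matrix b b ℝ)).mulVec x) p
      = A.mulVec (fun q => x (q, p.2)) p.1 := by
    rintro ⟨i, j⟩
    simp only [Matrix.mulVec, dotProduct, Fintype.sum_prod_type,
      Matrix.kroneckerMap_apply, Matrix.one_apply]
    congr 1; ext p
    rw [Finset.sum_eq_single j]
    · simp
    · intro q _ hq; simp [Ne.symm hq]
    · simp
  refine nrm_le_of_sq_le (mul_nonneg (l2OpNorm_nonneg A) (nrm_nonneg x)) ?_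
  have hx : ∀ j : b, nrm (A.mulVec (fun q => x (q, j))) ^ 2
      ≤ l2OpNorm A ^ 2 * nrm (fun q => x (q, j)) ^ 2 := by
    intro j
    have := nrm_mulVec_le A (fun q => x (q, j))
    have h1 := nrm_nonneg (A.mulVec (fun q => x (q, j)))
    nlinarith [l2OpNorm_nonneg A, nrm_nonneg (fun q : a => x (q, j))]
  calc nrm ((A ⊗ₖ (1 : Matrix b b ℝ)).mulVec x) ^ 2
      = ∑ p : a × b, (A.mulVec (fun q => x (q, p.2)) p.1) ^ 2 := by
        rw [sq_nrm]; exact Finset.sum_congr rfl fun p _ => by rw [key]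
    _ = ∑ j : b, nrm (A.mulVec (fun q => x (q, j))) ^ 2 := by
        rw [Fintype.sum_prod_type_right]
        exact Finset.sum_congr rfl fun j _ => by rw [sq_nrm]
    _ ≤ ∑ j : b, l2OpNorm A ^ 2 * nrm (fun q => x (q, j)) ^ 2 :=
        Finset.sum_le_sum fun j _ => hx j
    _ = l2OpNorm A ^ 2 * nrm x ^ 2 := by
        rw [← Finset.mul_sum]
        congr 1
        rw [sq_nrm x, Fintype.sum_prod_type_right]
        exact (Finset.sum_congr rfl fun j _ => by rw [sq_nrm]).symm
    _ = (l2OpNorm A * nrm x) ^ 2 := by ring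

lemma l2OpNorm_one_kron_le (B : Matrix b b ℝ) :
    l2OpNorm ((1 : Matrix a a ℝ) ⊗ₖ B) ≤ l2OpNorm B := by
  refine l2OpNorm_le_bound (l2OpNorm_nonneg B) fun x => ?_
  have key : ∀ p : a × b, (((1 : Matrix a a ℝ) ⊗ₖ B).mulVec x) p
      = B.mulVec (fun q => x (p.1, q)) p.2 := by
    rintro ⟨i, j⟩
    simp only [Matrix.mulVec, dotProduct, Fintype.sum_prod_type,
      Matrix.kroneckerMap_apply, Matrix.one_apply]
    rw [Finset.sum_eq_single i]
    · simp
    · intro q _ hq; simp [Ne.symm hq]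
    · simp
  refine nrm_le_of_sq_le (mul_nonneg (l2OpNorm_nonneg B) (nrm_nonneg x)) ?_
  have hx : ∀ i : a, nrm (B.mulVec (fun q => x (i, q))) ^ 2
      ≤ l2OpNorm B ^ 2 * nrm (fun q => x (i, q)) ^ 2 := by
    intro i
    have := nrm_mulVec_le B (fun q => x (i, q))
    have h1 := nrm_nonneg (B.mulVec (fun q => x (i, q)))
    nlinarith [l2OpNorm_nonneg B, nrm_nonneg (fun q : b => x (i, q))]
  calc nrm (((1 : Matrix a a ℝ) ⊗ₖ B).mulVec x) ^ 2
      = ∑ p : a × b, (B.mulVec (fun q => x (p.1, q)) p.2) ^ 2 := by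
        rw [sq_nrm]; exact Finset.sum_congr rfl fun p _ => by rw [key]
    _ = ∑ i : a, nrm (B.mulVec (fun q => x (i, q))) ^ 2 := by
        rw [Fintype.sum_prod_type]
        exact Finset.sum_congr rfl fun i _ => by rw [sq_nrm]
    _ ≤ ∑ i : a, l2OpNorm B ^ 2 * nrm (fun q => x (i, q)) ^ 2 :=
        Finset.sum_le_sum fun i _ => hx i
    _ = l2OpNorm B ^ 2 * nrm x ^ 2 := by
        rw [← Finset.mul_sum]
        congr 1
        rw [sq_nrm x, Fintype.sum_prod_type]
        exact (Finset.sum_congr rfl fun i _ => by rw [sq_nrm]).symm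
    _ = (l2OpNorm B * nrm x) ^ 2 := by ring

lemma l2OpNorm_kron_le (A : Matrix a a ℝ) (B : Matrix b b ℝ) :
    l2OpNorm (A ⊗ₖ B) ≤ l2OpNorm A * l2OpNorm B := by
  have : A ⊗ₖ B = (A ⊗ₖ (1 : Matrix b b ℝ)) * ((1 : Matrix a a ℝ) ⊗ₖ B) := by
    rw [← Matrix.mul_kronecker_mul, mul_one, one_mul]
  rw [this]
  calc l2OpNorm _ ≤ l2OpNorm (A ⊗ₖ (1 : Matrix b b ℝ)) * l2OpNorm ((1 : Matrix a a ℝ) ⊗ₖ B) :=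
        l2OpNorm_mul_le _ _
    _ ≤ l2OpNorm A * l2OpNorm B :=
        mul_le_mul (l2OpNorm_kron_one_le A) (l2OpNorm_one_kron_le B)
          (l2OpNorm_nonneg _) (l2OpNorm_nonneg _)

end Tens









section Transfer

variable {a b : Type*} [Fintype a] [Fintype b] [DecidableEq a] [DecidableEq b]

lemma nrm_comp_equiv (e : a ≃ b) (y : b → ℝ) : nrm (y ∘ e) = nrm y := by
  have h2 : nrm (y ∘ e) ^ 2 = nrm y ^ 2 := by
    rw [sq_nrm, sq_nrm]
    exact Fintype.sum_equiv e _ _ fun i => rfl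
  calc nrm (y ∘ e) = Real.sqrt (nrm (y ∘ e) ^ 2) := (Real.sqrt_sq (nrm_nonneg _)).symm
    _ = Real.sqrt (nrm y ^ 2) := by rw [h2]
    _ = nrm y := Real.sqrt_sq (nrm_nonneg _)

lemma dotp_comp_equiv (e : a ≃ b) (x y : b → ℝ) : dotp (x ∘ e) (y ∘ e) = dotp x y :=
  Fintype.sum_equiv e _ _ fun i => rfl

lemma reindex_mulVec (e : a ≃ b) (M : Matrix a a ℝ) (x : b → ℝ) :
    (Matrix.reindex e e M).mulVec x = (M.mulVec (x ∘ e)) ∘ e.symm := by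
  ext i
  simp [Matrix.reindex_apply, Matrix.submatrix_mulVec_equiv, Function.comp]

lemma l2OpNorm_reindex (e : a ≃ b) (M : Matrix a a ℝ) :
    l2OpNorm (Matrix.reindex e e M) = l2OpNorm M := by
  apply le_antisymm
  · refine l2OpNorm_le_bound (l2OpNorm_nonneg M) fun x => ?_
    rw [reindex_mulVec, nrm_comp_equiv e.symm, ← nrm_comp_equiv e x]
    exact nrm_mulVec_le M (x ∘ e)
  · refine l2OpNorm_le_bound (l2OpNorm_nonneg _) fun x => ?_
    have h := nrm_mulVec_le (Matrix.reindex e e M) (x ∘ e.symm)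
    rw [reindex_mulVec, nrm_comp_equiv e.symm, nrm_comp_equiv e.symm] at h
    have hx : (x ∘ e.symm) ∘ e = x := by ext i; simp
    rwa [hx] at h

end Transfer

section TensVec

variable {n : ℕ}


lemma kronPow_succ (A : Matrix (Fin n) (Fin n) ℝ) (k : ℕ) :
    kronPow A (k + 1) =
      Matrix.reindex (finProdFinEquiv.trans (finCongr (pow_succ n k).symm))
        (finProdFinEquiv.trans (finCongr (pow_succ n k).symm))
        ((kronPow A k) ⊗ₖ A) := rfl

lemma tensVec_succ (v : Fin (k+1) → (Fin n → ℝ)) :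
    tensVec (k+1) v = (tens (tensVec k fun i => v i.castSucc) (v (Fin.last k))) ∘
      (finProdFinEquiv.trans (finCongr (pow_succ n k).symm)).symm := rfl

lemma nrm_tensVec (k : ℕ) (v : Fin k → (Fin n → ℝ)) :
    nrm (tensVec k v) = ∏ i, nrm (v i) := by
  induction k with
  | zero =>
    simp only [tensVec, Finset.univ_eq_empty, Finset.prod_empty]
    have h2 : nrm (fun _ : Fin (n ^ 0) => (1 : ℝ)) ^ 2 = 1 := by
      rw [sq_nrm]; simp; exact (Finset.card_fin (n ^ 0)).trans (pow_zero n)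
    calc nrm (fun _ : Fin (n ^ 0) => (1 : ℝ))
        = Real.sqrt (nrm (fun _ : Fin (n ^ 0) => (1 : ℝ)) ^ 2) :=
          (Real.sqrt_sq (nrm_nonneg _)).symm
      _ = 1 := by rw [h2, Real.sqrt_one]
  | succ k ih =>
    rw [tensVec_succ, show (tens (tensVec k fun i => v i.castSucc) (v (Fin.last k))) ∘
        ((finProdFinEquiv.trans (finCongr (pow_succ n k).symm)).symm : _ ≃ _) =
        (tens (tensVec k fun i => v i.castSucc) (v (Fin.last k))) ∘
        ((finProdFinEquiv.trans (finCongr (pow_succ n k).symm)).symm) from rfl]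
    rw [nrm_comp_equiv ((finProdFinEquiv.trans (finCongr (pow_succ n k).symm)).symm) _]
    rw [nrm_tens, ih, Fin.prod_univ_castSucc]

lemma dotp_tensVec (k : ℕ) (ψ v : Fin k → (Fin n → ℝ)) :
    dotp (tensVec k ψ) (tensVec k v) = ∏ i, dotp (ψ i) (v i) := by
  induction k with
  | zero => simp [tensVec, dotp]; exact (Finset.card_fin (n ^ 0)).trans (pow_zero n)
  | succ k ih =>
    rw [tensVec_succ, tensVec_succ,
      dotp_comp_equiv ((finProdFinEquiv.trans (finCongr (pow_succ n k).symm)).symm),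
      dotp_tens, ih, Fin.prod_univ_castSucc]

lemma kronPow_mulVec_tensVec (A : Matrix (Fin n) (Fin n) ℝ) (k : ℕ)
    (v : Fin k → (Fin n → ℝ)) :
    (kronPow A k).mulVec (tensVec k v) = tensVec k fun i => A.mulVec (v i) := by
  induction k with
  | zero =>
    show (1 : Matrix (Fin (n ^ 0)) (Fin (n ^ 0)) ℝ).mulVec _ = _
    rw [Matrix.one_mulVec]
    rfl
  | succ k ih =>
    rw [kronPow_succ, tensVec_succ, reindex_mulVec]
    have hcomp : (tens (tensVec k fun i => v i.castSucc) (v (Fin.last k))) ∘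
        ((finProdFinEquiv.trans (finCongr (pow_succ n k).symm)).symm) ∘
        (finProdFinEquiv.trans (finCongr (pow_succ n k).symm)) =
        tens (tensVec k fun i => v i.castSucc) (v (Fin.last k)) := by
      ext p; simp
    rw [show (tens (tensVec k fun i => v i.castSucc) (v (Fin.last k)) ∘
        ((finProdFinEquiv.trans (finCongr (pow_succ n k).symm)).symm)) ∘
        (finProdFinEquiv.trans (finCongr (pow_succ n k).symm)) =
        tens (tensVec k fun i => v i.castSucc) (v (Fin.last k)) from hcomp]
    rw [kron_mulVec_tens, ih, tensVec_succ]

lemma l2OpNorm_kronPow_le (A : Matrix (Fin n) (Fin n) ℝ) (k : ℕ) (hk : 1 ≤ k) :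
    l2OpNorm (kronPow A k) ≤ l2OpNorm A ^ k := by
  induction k with
  | zero => omega
  | succ k ih =>
    rcases Nat.eq_or_lt_of_le hk with h | h
    · -- k + 1 = 1, i.e. k = 0
      have hk0 : k = 0 := by omega
      subst hk0
      rw [kronPow_succ, l2OpNorm_reindex, pow_one]
      calc l2OpNorm ((kronPow A 0) ⊗ₖ A) ≤ l2OpNorm (kronPow A 0) * l2OpNorm A :=
            l2OpNorm_kron_le _ _
        _ ≤ 1 * l2OpNorm A := by
            refine mul_le_mul_of_nonneg_right ?_ (l2OpNorm_nonneg A)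
            show l2OpNorm (1 : Matrix (Fin (n ^ 0)) (Fin (n ^ 0)) ℝ) ≤ 1
            refine l2OpNorm_le_bound zero_le_one fun x => ?_
            rw [Matrix.one_mulVec, one_mul]
        _ = l2OpNorm A := one_mul _
    · have hk1 : 1 ≤ k := by omega
      rw [kronPow_succ, l2OpNorm_reindex, pow_succ]
      calc l2OpNorm ((kronPow A k) ⊗ₖ A) ≤ l2OpNorm (kronPow A k) * l2OpNorm A :=
            l2OpNorm_kron_le _ _
        _ ≤ l2OpNorm A ^ k * l2OpNorm A :=
            mul_le_mul_of_nonneg_right (ih hk1) (l2OpNorm_nonneg A)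

lemma pow_le_l2OpNorm_kronPow (A : Matrix (Fin n) (Fin n) ℝ) (k : ℕ) (hk : 1 ≤ k) :
    l2OpNorm A ^ k ≤ l2OpNorm (kronPow A k) := by
  -- first: ∀ x, nrm (A.mulVec x) ^ k ≤ l2OpNorm (kronPow A k) * nrm x ^ k
  have key : ∀ x : Fin n → ℝ, nrm (A.mulVec x) ^ k ≤ l2OpNorm (kronPow A k) * nrm x ^ k := by
    intro x
    have h1 := nrm_mulVec_le (kronPow A k) (tensVec k fun _ => x)
    rw [kronPow_mulVec_tensVec, nrm_tensVec, nrm_tensVec] at h1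
    simpa [Finset.prod_const, Finset.card_univ] using h1
  rcases le_or_gt (l2OpNorm A) 0 with h0 | h0
  · have : l2OpNorm A = 0 := le_antisymm h0 (l2OpNorm_nonneg A)
    rw [this, zero_pow (by omega)]
    exact l2OpNorm_nonneg _
  · by_contra hcon
    push_neg at hcon
    -- l2OpNorm (kronPow A k) < l2OpNorm A ^ k
    set N := l2OpNorm (kronPow A k) with hN
    have hN0 : 0 ≤ N := l2OpNorm_nonneg _
    have hNlt : N < l2OpNorm A ^ k := hcon
    -- choose c'' strictly between
    set c := (N + l2OpNorm A ^ k) / 2 with hc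
    have hc1 : N < c := by rw [hc]; linarith
    have hc2 : c < l2OpNorm A ^ k := by rw [hc]; linarith
    have hc0 : 0 ≤ c := le_trans hN0 hc1.le
    set r := c ^ ((1 : ℝ) / (k : ℝ)) with hr
    have hr0 : 0 ≤ r := Real.rpow_nonneg hc0 _
    have hkpos : (0 : ℝ) < k := by exact_mod_cast Nat.lt_of_lt_of_le Nat.zero_lt_one hk
    have hrk : r ^ k = c := by
      rw [hr, ← Real.rpow_natCast (c ^ ((1:ℝ)/(k:ℝ))) k, ← Real.rpow_mul hc0]
      rw [one_div_mul_cancel (ne_of_gt hkpos), Real.rpow_one]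
    have hrA : r < l2OpNorm A := by
      by_contra hra
      push_neg at hra
      have : l2OpNorm A ^ k ≤ r ^ k := pow_le_pow_left₀ (le_of_lt h0) hra k
      rw [hrk] at this; linarith
    obtain ⟨x, hx⟩ := exists_nrm_lt_mulVec hr0 hrA
    have hxpos : 0 < nrm x := by
      by_contra hxp
      push_neg at hxp
      have hx0 : nrm x = 0 := le_antisymm hxp (nrm_nonneg x)
      rw [hx0, mul_zero] at hx
      have := nrm_mulVec_le A x
      rw [hx0, mul_zero] at this
      linarith
    have h2 : (r * nrm x) ^ k ≤ nrm (A.mulVec x) ^ k :=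
      pow_le_pow_left₀ (mul_nonneg hr0 (nrm_nonneg x)) hx.le k
    have h3 := key x
    have h4 : r ^ k * nrm x ^ k ≤ N * nrm x ^ k := by
      calc r ^ k * nrm x ^ k = (r * nrm x) ^ k := (mul_pow r (nrm x) k).symm
        _ ≤ nrm (A.mulVec x) ^ k := h2
        _ ≤ N * nrm x ^ k := h3
    have h5 : r ^ k ≤ N := le_of_mul_le_mul_right h4 (pow_pos hxpos k)
    rw [hrk] at h5
    linarith

end TensVec





section Alg

variable {n : ℕ}

lemma kronPow_succ' (A : Matrix (Fin n) (Fin n) ℝ) (k : ℕ) :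
    kronPow A (k + 1) =
      Matrix.reindex (finProdFinEquiv.trans (finCongr (pow_succ n k).symm))
        (finProdFinEquiv.trans (finCongr (pow_succ n k).symm))
        ((kronPow A k) ⊗ₖ A) := rfl

lemma kronPow_one_eq (k : ℕ) : kronPow (1 : Matrix (Fin n) (Fin n) ℝ) k = 1 := by
  induction k with
  | zero => rfl
  | succ k ih =>
    rw [kronPow_succ', ih, Matrix.one_kronecker_one, Matrix.reindex_apply,
      Matrix.submatrix_one_equiv]

lemma kronPow_mul (M N : Matrix (Fin n) (Fin n) ℝ) (k : ℕ) :
    kronPow (M * N) k = kronPow M k * kronPow N k := by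
  induction k with
  | zero => simp [kronPow]; exact (mul_one _).symm
  | succ k ih =>
    rw [kronPow_succ', kronPow_succ', kronPow_succ', ih, Matrix.mul_kronecker_mul,
      Matrix.reindex_apply, Matrix.reindex_apply, Matrix.reindex_apply]
    exact (Matrix.submatrix_mul_equiv _ _ _ _ _).symm

lemma wordProd_nil {ι : Type*} [Fintype ι] [DecidableEq ι] {m : ℕ}
    (A : Fin m → Matrix ι ι ℝ) (σ : Fin 0 → Fin m) : wordProd A σ = 1 := by
  simp [wordProd]

lemma wordProd_cons {ι : Type*} [Fintype ι] [DecidableEq ι] {m N : ℕ}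
    (A : Fin m → Matrix ι ι ℝ) (i : Fin m) (σ : Fin N → Fin m) :
    wordProd A (Fin.cons i σ) = wordProd A σ * A i := by
  simp only [wordProd, List.ofFn_succ, Fin.cons_zero, Fin.cons_succ,
    List.reverse_cons, List.prod_append, List.prod_cons, List.prod_nil, mul_one]

lemma sum_pow_eq_sum_wordProd {ι : Type*} [Fintype ι] [DecidableEq ι] {m : ℕ}
    (B : Fin m → Matrix ι ι ℝ) (N : ℕ) :
    (∑ i, B i) ^ N = ∑ σ : Fin N → Fin m, wordProd B σ := by
  induction N with
  | zero =>
    rw [pow_zero, Fintype.sum_subsingleton _ (fun i : Fin 0 => i.elim0), wordProd_nil]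
  | succ N ih =>
    rw [pow_succ, ih, Finset.sum_mul]
    have h1 : ∀ σ : Fin N → Fin m, wordProd B σ * (∑ i, B i)
        = ∑ i, wordProd B (Fin.cons i σ) := by
      intro σ
      rw [Finset.mul_sum]
      exact Finset.sum_congr rfl fun i _ => (wordProd_cons B i σ).symm
    have hbij : Function.Bijective
        (fun p : (Fin N → Fin m) × Fin m => Fin.cons p.2 p.1 : _ → (Fin (N+1) → Fin m)) := by
      rw [Function.bijective_iff_has_inverse]
      refine ⟨fun τ => (fun i => τ i.succ, τ 0), fun p => ?_, fun τ => ?_⟩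
      · obtain ⟨σ, i⟩ := p
        simp [Fin.cons_zero, Fin.cons_succ]
      · funext i
        refine Fin.cases ?_ ?_ i
        · simp [Fin.cons_zero]
        · intro j; simp [Fin.cons_succ]
    calc ∑ σ : Fin N → Fin m, wordProd B σ * (∑ i, B i)
        = ∑ σ : Fin N → Fin m, ∑ i, wordProd B (Fin.cons i σ) :=
          Finset.sum_congr rfl fun σ _ => h1 σ
      _ = ∑ p : (Fin N → Fin m) × Fin m, wordProd B (Fin.cons p.2 p.1) := by
          rw [Fintype.sum_prod_type]
      _ = ∑ τ : Fin (N+1) → Fin m, wordProd B τ :=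
          Fintype.sum_bijective _ hbij _ _ fun p => rfl

end Alg






open scoped InnerProductSpace RealInnerProductSpace

lemma dotp_eq_inner {ι : Type*} [Fintype ι] (v w : ι → ℝ) :
    dotp v w = ⟪(WithLp.equiv 2 (ι → ℝ)).symm v, (WithLp.equiv 2 (ι → ℝ)).symm w⟫_ℝ := by
  rw [PiLp.inner_apply]
  simp [dotp, mul_comm]

lemma properCone_zero_mem {n : ℕ} {K : Set (Fin n → ℝ)} (hK : IsProperCone K) :
    (0 : Fin n → ℝ) ∈ K := by
  obtain ⟨-, -, -, -, hp⟩ := hK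
  have : (0 : Fin n → ℝ) ∈ K ∩ (-K) := by rw [hp]; rfl
  exact this.1

lemma properCone_add_mem {n : ℕ} {K : Set (Fin n → ℝ)} (hK : IsProperCone K) :
    ∀ x ∈ K, ∀ y ∈ K, x + y ∈ K := by
  obtain ⟨-, hconv, hscale, -, -⟩ := hK
  intro x hx y hy
  have h1 : (1/2 : ℝ) • x + (1/2 : ℝ) • y ∈ K :=
    hconv hx hy (by norm_num) (by norm_num) (by norm_num)
  have h2 := hscale 2 (by norm_num) _ h1
  rw [smul_add, smul_smul, smul_smul] at h2
  norm_num at h2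
  exact h2

lemma exists_pos_functional {n : ℕ} {K : Set (Fin n → ℝ)} (hK : IsProperCone K) :
    ∃ (φ : Fin n → ℝ) (c₀ : ℝ), 0 < c₀ ∧ ∀ x ∈ K, c₀ * nrm x ≤ dotp φ x := by
  classical
  obtain ⟨hclosed, hconv, hscale, hint, hpointed⟩ := hK
  set e := WithLp.equiv 2 (Fin n → ℝ) with he
  -- the cone in Euclidean space
  set KE : ConvexCone ℝ (EuclideanSpace ℝ (Fin n)) :=
    { carrier := {x : EuclideanSpace ℝ (Fin n) | e x ∈ K}
      smul_mem' := by
        intro c hc x hx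
        show e (c • x) ∈ K
        have : e (c • x) = c • e x := rfl
        rw [this]
        exact hscale c hc.le _ hx
      add_mem' := by
        intro x hx y hy
        show e (x + y) ∈ K
        have : e (x + y) = e x + e y := rfl
        rw [this]
        exact properCone_add_mem ⟨hclosed, hconv, hscale, hint, hpointed⟩ _ hx _ hy }
    with hKE
  have hKEmem : ∀ x : EuclideanSpace ℝ (Fin n), x ∈ KE ↔ e x ∈ K := fun _ => Iff.rfl
  have hKEclosed : IsClosed (KE : Set (EuclideanSpace ℝ (Fin n))) :=
    IsClosed.preimage (PiLp.continuous_ofLp 2 _) hclosed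
  have hzero : (0 : EuclideanSpace ℝ (Fin n)) ∈ KE := by
    rw [hKEmem]
    exact properCone_zero_mem ⟨hclosed, hconv, hscale, hint, hpointed⟩
  have hKEne : (KE : Set (EuclideanSpace ℝ (Fin n))).Nonempty := ⟨0, hzero⟩
  have hKEsmul : ∀ (c : NNReal) (x : EuclideanSpace ℝ (Fin n)), x ∈ KE → c • x ∈ KE := by
    intro c x hx
    rcases eq_or_ne c 0 with h | h
    · rw [h, zero_smul]; exact hzero
    · exact KE.smul_mem (NNReal.coe_pos.mpr (pos_iff_ne_zero.mpr h)) hx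
  let P : ProperCone ℝ (EuclideanSpace ℝ (Fin n)) :=
    { carrier := (KE : Set _), add_mem' := fun ha hb => KE.add_mem ha hb, zero_mem' := hzero,
      smul_mem' := fun c x hx => hKEsmul c x hx, isClosed' := hKEclosed }
  set Kstar : Set (EuclideanSpace ℝ (Fin n)) :=
    {y | ∀ x ∈ KE, 0 ≤ ⟪x, y⟫_ℝ} with hKstar
  -- span of the dual is everything
  have hspan : Submodule.span ℝ Kstar = ⊤ := by
    by_contra hne
    have hW : (Submodule.span ℝ Kstar)ᗮ ≠ ⊥ := by
      intro hbot
      exact hne (Submodule.orthogonal_eq_bot_iff.mp hbot)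
    obtain ⟨w, hwmem, hwne⟩ := Submodule.ne_bot_iff _ |>.mp hW
    have hworth : ∀ y ∈ Kstar, ⟪y, w⟫_ℝ = 0 := fun y hy =>
      (Submodule.mem_orthogonal _ _).mp hwmem y (Submodule.subset_span hy)
    have hwK : w ∈ KE := by
      by_contra hw
      obtain ⟨y, hy1, hy2⟩ :=
        P.hyperplane_separation' (x₀ := w) hw
      have : ⟪y, w⟫_ℝ = 0 := hworth y hy1
      rw [real_inner_comm] at hy2
      linarith
    have hwK' : -w ∈ KE := by
      by_contra hw
      obtain ⟨y, hy1, hy2⟩ :=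
        P.hyperplane_separation' (x₀ := -w) hw
      have h0 : ⟪y, w⟫_ℝ = 0 := hworth y hy1
      rw [real_inner_comm] at hy2
      rw [inner_neg_right, h0] at hy2
      linarith
    -- pointedness
    have h1 : e w ∈ K := (hKEmem w).mp hwK
    have h2 : e (-w) ∈ K := (hKEmem _).mp hwK'
    have h2' : -(e w) ∈ K := by
      have : e (-w) = -(e w) := rfl
      rwa [this] at h2
    have : e w ∈ K ∩ (-K) := ⟨h1, by rwa [Set.mem_neg]⟩
    rw [hpointed] at this
    exact hwne (by simpa [he] using this)
  -- a finite subfamily of the dual spanning everything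
  have hTex : ∀ i : Fin n, ∃ T : Finset (EuclideanSpace ℝ (Fin n)),
      ↑T ⊆ Kstar ∧ (EuclideanSpace.basisFun (Fin n) ℝ) i ∈ Submodule.span ℝ (T : Set _) := by
    intro i
    have : ((EuclideanSpace.basisFun (Fin n) ℝ) i : EuclideanSpace ℝ (Fin n)) ∈
        Submodule.span ℝ Kstar := by rw [hspan]; trivial
    obtain ⟨T, hT1, hT2⟩ := Submodule.mem_span_finite_of_mem_span this
    exact ⟨T, hT1, hT2⟩
  choose T hTsub hTspan using hTex
  set F : Finset (EuclideanSpace ℝ (Fin n)) := Finset.univ.biUnion T with hF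
  have hFsub : (↑F : Set (EuclideanSpace ℝ (Fin n))) ⊆ Kstar := by
    intro y hy
    simp only [hF, Finset.coe_biUnion, Set.mem_iUnion, Finset.mem_coe] at hy
    obtain ⟨i, -, hyi⟩ := hy
    exact hTsub i hyi
  have hFspan : Submodule.span ℝ (↑F : Set (EuclideanSpace ℝ (Fin n))) = ⊤ := by
    rw [← top_le_iff, ← (EuclideanSpace.basisFun (Fin n) ℝ).toBasis.span_eq]
    refine Submodule.span_le.mpr ?_
    rintro z ⟨i, rfl⟩
    refine Submodule.span_mono ?_ (hTspan i)
    intro y hy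
    simp only [hF, Finset.coe_biUnion, Set.mem_iUnion, Finset.mem_coe]
    exact ⟨i, Finset.mem_univ i, hy⟩
  set φE : EuclideanSpace ℝ (Fin n) := ∑ y ∈ F, y with hφE
  have hφnn : ∀ x ∈ KE, 0 ≤ ⟪x, φE⟫_ℝ := by
    intro x hx
    rw [hφE, inner_sum]
    exact Finset.sum_nonneg fun y hy => (hFsub hy) x hx
  have hφpos : ∀ x, x ∈ KE → x ≠ 0 → 0 < ⟪x, φE⟫_ℝ := by
    intro x hx hxne
    rcases lt_or_eq_of_le (hφnn x hx) with h | h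
    · exact h
    exfalso
    have hall : ∀ y ∈ F, ⟪x, y⟫_ℝ = 0 := by
      have hsum : ∑ y ∈ F, ⟪x, y⟫_ℝ = 0 := by
        rw [← inner_sum]; exact h.symm
      intro y hy
      exact (Finset.sum_eq_zero_iff_of_nonneg
        (fun y hy => (hFsub hy) x hx)).mp hsum y hy
    have hxorth : x ∈ (Submodule.span ℝ (↑F : Set (EuclideanSpace ℝ (Fin n))))ᗮ := by
      rw [Submodule.mem_orthogonal]
      intro u hu
      induction hu using Submodule.span_induction with
      | mem z hz => rw [real_inner_comm]; exact hall z hz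
      | zero => simp
      | add a b _ _ ha hb => rw [inner_add_left, ha, hb, add_zero]
      | smul c a _ ha => rw [inner_smul_left, ha, mul_zero]
    rw [hFspan, Submodule.top_orthogonal_eq_bot] at hxorth
    exact hxne (by simpa using hxorth)
  -- the unit "sphere" of the cone
  set S : Set (EuclideanSpace ℝ (Fin n)) := {x | x ∈ KE ∧ ‖x‖ = 1} with hS
  rcases Set.eq_empty_or_nonempty S with hSe | hSne
  · -- K ⊆ {0}
    refine ⟨0, 1, one_pos, ?_⟩
    intro x hx
    have hx0 : x = 0 := by
      by_contra hxne
      set xE : EuclideanSpace ℝ (Fin n) := e.symm x with hxE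
      have hxEK : xE ∈ KE := by rw [hKEmem]; simpa [hxE] using hx
      have hxEne : xE ≠ 0 := by
        intro h0
        apply hxne
        have := congrArg e h0
        simpa [hxE, he] using this
      have hnorm : (0:ℝ) < ‖xE‖ := norm_pos_iff.mpr hxEne
      have hz : (‖xE‖⁻¹ • xE) ∈ KE := KE.smul_mem (inv_pos.mpr hnorm) hxEK
      have hz1 : ‖(‖xE‖⁻¹ • xE)‖ = 1 := by
        rw [norm_smul, norm_inv, norm_norm, inv_mul_cancel₀ (ne_of_gt hnorm)]
      have : (‖xE‖⁻¹ • xE) ∈ S := ⟨hz, hz1⟩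
      rw [hSe] at this
      exact this
    subst hx0
    have h1 : nrm (0 : Fin n → ℝ) = 0 := by
      simp [nrm]
    have h2 : dotp (0 : Fin n → ℝ) 0 = 0 := by simp [dotp]
    rw [h1, h2, mul_zero]
  · have hScompact : IsCompact S := by
      rw [Metric.isCompact_iff_isClosed_bounded]
      constructor
      · exact hKEclosed.inter (isClosed_eq continuous_norm continuous_const)
      · apply Bornology.IsBounded.subset (Metric.isBounded_closedBall (x := 0) (r := 1))
        intro x hx
        simp [Metric.mem_closedBall, hx.2.le, dist_zero_right, hx.2]
    have hcont : ContinuousOn (fun x : EuclideanSpace ℝ (Fin n) => ⟪x, φE⟫_ℝ) S :=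
      (continuous_id.inner continuous_const).continuousOn
    obtain ⟨x₀, hx₀S, hmin⟩ := hScompact.exists_isMinOn hSne hcont
    set c₀ := ⟪x₀, φE⟫_ℝ with hc₀
    have hx₀ne : x₀ ≠ 0 := by
      intro h
      rw [h] at hx₀S
      simpa using hx₀S.2
    have hc₀pos : 0 < c₀ := hφpos x₀ hx₀S.1 hx₀ne
    refine ⟨e φE, c₀, hc₀pos, ?_⟩
    intro x hx
    have hdot : dotp (e φE) x = ⟪e.symm x, φE⟫_ℝ := by
      rw [dotp_eq_inner, real_inner_comm]
      congr 1
    rcases eq_or_ne x 0 with rfl | hxne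
    · rw [hdot]
      have h1 : nrm (0 : Fin n → ℝ) = 0 := by simp [nrm]
      rw [h1, mul_zero]
      have : e.symm (0 : Fin n → ℝ) = 0 := rfl
      rw [this, inner_zero_left]
    · set xE : EuclideanSpace ℝ (Fin n) := e.symm x with hxE
      have hxEK : xE ∈ KE := by rw [hKEmem]; simpa [hxE] using hx
      have hxEne : xE ≠ 0 := by
        intro h0
        apply hxne
        have := congrArg e h0
        simpa [hxE, he] using this
      have hnorm : (0:ℝ) < ‖xE‖ := norm_pos_iff.mpr hxEne
      have hz : (‖xE‖⁻¹ • xE) ∈ KE := KE.smul_mem (inv_pos.mpr hnorm) hxEK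
      have hz1 : ‖(‖xE‖⁻¹ • xE)‖ = 1 := by
        rw [norm_smul, norm_inv, norm_norm, inv_mul_cancel₀ (ne_of_gt hnorm)]
      have hmin' : c₀ ≤ ⟪‖xE‖⁻¹ • xE, φE⟫_ℝ := hmin ⟨hz, hz1⟩
      rw [real_inner_smul_left] at hmin'
      have hnrmx : nrm x = ‖xE‖ := rfl
      rw [hdot, hnrmx]
      calc c₀ * ‖xE‖ ≤ (‖xE‖⁻¹ * ⟪xE, φE⟫_ℝ) * ‖xE‖ :=
            mul_le_mul_of_nonneg_right hmin' hnorm.le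
        _ = ⟪xE, φE⟫_ℝ := by field_simp







lemma tensVec_succ'' {n k : ℕ} (v : Fin (k+1) → (Fin n → ℝ)) :
    tensVec (k+1) v = (tens (tensVec k fun i => v i.castSucc) (v (Fin.last k))) ∘
      (finProdFinEquiv.trans (finCongr (pow_succ n k).symm)).symm := rfl


section Small

variable {ι : Type*} [Fintype ι]

lemma nrm_zero : nrm (0 : ι → ℝ) = 0 := by
  rw [nrm]
  rw [show ((WithLp.equiv 2 (ι → ℝ)).symm 0) = 0 from rfl, norm_zero]

lemma nrm_add_le (v w : ι → ℝ) : nrm (v + w) ≤ nrm v + nrm w := by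
  rw [nrm, nrm, nrm, show ((WithLp.equiv 2 (ι → ℝ)).symm (v + w)) =
    (WithLp.equiv 2 (ι → ℝ)).symm v + (WithLp.equiv 2 (ι → ℝ)).symm w from rfl]
  exact norm_add_le _ _

lemma nrm_smul (c : ℝ) (v : ι → ℝ) : nrm (c • v) = |c| * nrm v := by
  rw [nrm, nrm, show ((WithLp.equiv 2 (ι → ℝ)).symm (c • v)) =
    c • (WithLp.equiv 2 (ι → ℝ)).symm v from rfl, norm_smul, Real.norm_eq_abs]

lemma nrm_sum_le {α : Type*} (s : Finset α) (f : α → (ι → ℝ)) :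
    nrm (∑ a ∈ s, f a) ≤ ∑ a ∈ s, nrm (f a) := by
  classical
  induction s using Finset.induction with
  | empty => simp [nrm_zero]
  | insert _ _ hA ih =>
    rw [Finset.sum_insert hA, Finset.sum_insert hA]
    exact le_trans (nrm_add_le _ _) (by linarith)

lemma abs_le_nrm (v : ι → ℝ) (i : ι) : |v i| ≤ nrm v := by
  have h1 : v i ^ 2 ≤ nrm v ^ 2 := by
    rw [sq_nrm]
    exact Finset.single_le_sum (fun j _ => sq_nonneg (v j)) (Finset.mem_univ i)
  calc |v i| = Real.sqrt (v i ^ 2) := (Real.sqrt_sq_eq_abs _).symm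
    _ ≤ Real.sqrt (nrm v ^ 2) := Real.sqrt_le_sqrt h1
    _ = nrm v := Real.sqrt_sq (nrm_nonneg v)

lemma pinorm_le_nrm (v : ι → ℝ) : ‖v‖ ≤ nrm v := by
  refine pi_norm_le_iff_of_nonneg (nrm_nonneg v) |>.mpr fun i => ?_
  rw [Real.norm_eq_abs]
  exact abs_le_nrm v i

lemma dotp_zero_right (v : ι → ℝ) : dotp v 0 = 0 := by simp [dotp]

lemma dotp_add_right (v w z : ι → ℝ) : dotp v (w + z) = dotp v w + dotp v z := by
  simp [dotp, mul_add, Finset.sum_add_distrib]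

lemma dotp_smul_right (v : ι → ℝ) (c : ℝ) (w : ι → ℝ) :
    dotp v (c • w) = c * dotp v w := by
  simp [dotp, Finset.mul_sum]
  exact Finset.sum_congr rfl fun i _ => by ring

lemma dotp_sum_right {α : Type*} (v : ι → ℝ) (s : Finset α) (f : α → (ι → ℝ)) :
    dotp v (∑ a ∈ s, f a) = ∑ a ∈ s, dotp v (f a) := by
  classical
  induction s using Finset.induction with
  | empty => simp [dotp_zero_right]
  | insert _ _ hA ih => rw [Finset.sum_insert hA, Finset.sum_insert hA, dotp_add_right, ih]

end Small

section Span

variable {a b c' : Type*} [Fintype a] [Fintype b] [Fintype c']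

lemma tens_comp_mem_span (e : a × b ≃ c') (S₁ : Set (a → ℝ)) (S₂ : Set (b → ℝ))
    {X : a → ℝ} {w : b → ℝ} (hX : X ∈ Submodule.span ℝ S₁) (hw : w ∈ Submodule.span ℝ S₂) :
    (fun p => tens X w (e.symm p)) ∈ Submodule.span ℝ
      {y : c' → ℝ | ∃ s₁ ∈ S₁, ∃ s₂ ∈ S₂, y = fun p => tens s₁ s₂ (e.symm p)} := by
  set Im := {y : c' → ℝ | ∃ s₁ ∈ S₁, ∃ s₂ ∈ S₂, y = fun p => tens s₁ s₂ (e.symm p)} with hIm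
  induction hX using Submodule.span_induction with
  | mem s₁ hs₁ =>
    induction hw using Submodule.span_induction with
    | mem s₂ hs₂ => exact Submodule.subset_span ⟨s₁, hs₁, s₂, hs₂, rfl⟩
    | zero =>
      have : (fun p => tens s₁ (0 : b → ℝ) (e.symm p)) = (0 : c' → ℝ) := by
        funext p; simp [tens]
      rw [this]; exact Submodule.zero_mem _
    | add y z _ _ hy hz =>
      have : (fun p => tens s₁ (y + z) (e.symm p)) =
          (fun p => tens s₁ y (e.symm p)) + (fun p => tens s₁ z (e.symm p)) := by
        funext p; simp [tens]; ring
      rw [this]; exact Submodule.add_mem _ hy hz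
    | smul c y _ hy =>
      have : (fun p => tens s₁ (c • y) (e.symm p)) =
          c • (fun p => tens s₁ y (e.symm p)) := by
        funext p; simp [tens]; ring
      rw [this]; exact Submodule.smul_mem _ _ hy
  | zero =>
    have : (fun p => tens (0 : a → ℝ) w (e.symm p)) = (0 : c' → ℝ) := by
      funext p; simp [tens]
    rw [this]; exact Submodule.zero_mem _
  | add y z _ _ hy hz =>
    have : (fun p => tens (y + z) w (e.symm p)) =
        (fun p => tens y w (e.symm p)) + (fun p => tens z w (e.symm p)) := by
      funext p; simp [tens]; ring
    rw [this]; exact Submodule.add_mem _ hy hz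
  | smul c y _ hy =>
    have : (fun p => tens (c • y) w (e.symm p)) = c • (fun p => tens y w (e.symm p)) := by
      funext p; simp [tens]; ring
    rw [this]; exact Submodule.smul_mem _ _ hy

end Span

section TensSpan

variable {n : ℕ} {ι : Type*} [Fintype ι]

lemma tensVec_mem_span (g : ι → (Fin n → ℝ))
    (hg : ∀ w, w ∈ Submodule.span ℝ (Set.range g)) :
    ∀ (k : ℕ) (v : Fin k → (Fin n → ℝ)),
      tensVec k v ∈ Submodule.span ℝ
        (Set.range (fun f : Fin k → ι => tensVec k (fun i => g (f i)))) := by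
  intro k
  induction k with
  | zero =>
    intro v
    exact Submodule.subset_span ⟨fun i => i.elim0, rfl⟩
  | succ k ih =>
    intro v
    have hX := ih (fun i => v i.castSucc)
    have hw := hg (v (Fin.last k))
    have h := tens_comp_mem_span (finProdFinEquiv.trans (finCongr (pow_succ n k).symm))
      _ _ hX hw
    have hmono : {y : Fin (n ^ (k+1)) → ℝ |
        ∃ s₁ ∈ Set.range (fun f : Fin k → ι => tensVec k (fun i => g (f i))),
        ∃ s₂ ∈ Set.range g, y = fun p => tens s₁ s₂
          ((finProdFinEquiv.trans (finCongr (pow_succ n k).symm)).symm p)} ⊆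
        Set.range (fun f : Fin (k+1) → ι => tensVec (k+1) (fun i => g (f i))) := by
      rintro y ⟨s₁, ⟨f', rfl⟩, s₂, ⟨j, rfl⟩, rfl⟩
      set F : Fin (k+1) → ι := Fin.snoc f' j with hF
      refine ⟨F, ?_⟩
      show tensVec (k+1) (fun i => g (F i)) = _
      rw [tensVec_succ'' (fun i => g (F i))]
      have h1 : (fun i : Fin k => g (F i.castSucc)) = fun i => g (f' i) := by
        funext i; rw [hF, Fin.snoc_castSucc]
      have h2 : g (F (Fin.last k)) = g j := by rw [hF, Fin.snoc_last]
      rw [h1, h2]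
      rfl
    exact Submodule.span_mono hmono (by exact h)

lemma single_eq_tensVec (k : ℕ) (p : Fin (n ^ k)) :
    ∃ v : Fin k → (Fin n → ℝ), tensVec k v = Pi.single p 1 := by
  induction k with
  | zero =>
    refine ⟨fun i => i.elim0, ?_⟩
    funext q
    have hq : q = p := by
      have hq1 : (q : ℕ) < 1 := by simpa using q.isLt
      have hp1 : (p : ℕ) < 1 := by simpa using p.isLt
      exact Fin.ext (by omega)
    subst hq
    rw [Pi.single_eq_same]
    rfl
  | succ k ih =>
    set e := finProdFinEquiv.trans (finCongr (pow_succ n k).symm) with he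
    obtain ⟨v', hv'⟩ := ih (e.symm p).1
    set V : Fin (k+1) → (Fin n → ℝ) := Fin.snoc v' (Pi.single (e.symm p).2 1) with hV
    refine ⟨V, ?_⟩
    rw [tensVec_succ'' V]
    have h1 : (fun i : Fin k => V i.castSucc) = v' := by
      funext i; rw [hV, Fin.snoc_castSucc]
    have h2 : V (Fin.last k) = Pi.single (e.symm p).2 1 := by rw [hV, Fin.snoc_last]
    rw [h1, h2, hv']
    funext q
    show tens (Pi.single (e.symm p).1 1) (Pi.single (e.symm p).2 1) (e.symm q) = _
    rcases eq_or_ne q p with rfl | hqp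
    · rw [Pi.single_eq_same, tens, Pi.single_eq_same, Pi.single_eq_same, mul_one]
    · rw [Pi.single_eq_of_ne hqp]
      have : e.symm q ≠ e.symm p := fun h => hqp (e.symm.injective h)
      rw [tens]
      by_cases h1 : (e.symm q).1 = (e.symm p).1
      · have h2 : (e.symm q).2 ≠ (e.symm p).2 := by
          intro h2
          exact this (Prod.ext h1 h2)
        rw [Pi.single_eq_of_ne h2, mul_zero]
      · rw [Pi.single_eq_of_ne h1, zero_mul]

lemma span_tensVec_top (g : ι → (Fin n → ℝ))
    (hg : ∀ w, w ∈ Submodule.span ℝ (Set.range g)) (k : ℕ) :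
    Submodule.span ℝ
      (Set.range (fun f : Fin k → ι => tensVec k (fun i => g (f i)))) = ⊤ := by
  rw [← top_le_iff]
  intro x _
  have hx : x = ∑ p : Fin (n ^ k), x p • (Pi.single p 1 : Fin (n ^ k) → ℝ) := by
    conv_lhs => rw [← Finset.univ_sum_single x]
    refine Finset.sum_congr rfl fun p _ => ?_
    rw [← Pi.single_smul, smul_eq_mul, mul_one]
  rw [hx]
  refine Submodule.sum_mem _ fun p _ => Submodule.smul_mem _ _ ?_
  obtain ⟨v, hv⟩ := single_eq_tensVec k p
  rw [← hv]
  exact tensVec_mem_span g hg k v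












-- previously proven results, as axioms for this chunk

section Engine

variable {n m k : ℕ}

lemma kronPow_wordProd (A : Fin m → Matrix (Fin n) (Fin n) ℝ) (k : ℕ) :
    ∀ {N : ℕ} (σ : Fin N → Fin m),
      kronPow (wordProd A σ) k = wordProd (fun i => kronPow (A i) k) σ := by
  intro N
  induction N with
  | zero => intro σ; rw [wordProd_nil, wordProd_nil, kronPow_one_eq]
  | succ N ih =>
    intro σ
    rw [← Fin.cons_self_tail σ, wordProd_cons, wordProd_cons, kronPow_mul, ih]

lemma wordProd_leavesInvariant (A : Fin m → Matrix (Fin n) (Fin n) ℝ)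
    {K : Set (Fin n → ℝ)} (hinv : ∀ i, LeavesInvariant (A i) K) :
    ∀ {N : ℕ} (σ : Fin N → Fin m), LeavesInvariant (wordProd A σ) K := by
  intro N
  induction N with
  | zero =>
    intro σ v hv
    rw [wordProd_nil, Matrix.one_mulVec]
    exact hv
  | succ N ih =>
    intro σ v hv
    rw [← Fin.cons_self_tail σ, wordProd_cons, ← Matrix.mulVec_mulVec]
    exact ih _ _ (hinv _ _ hv)

lemma sum_mulVec {ι : Type*} [Fintype ι] [DecidableEq ι] {α : Type*} (s : Finset α)
    (M : α → Matrix ι ι ℝ) (x : ι → ℝ) :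
    (∑ a ∈ s, M a).mulVec x = ∑ a ∈ s, (M a).mulVec x := by
  classical
  induction s using Finset.induction with
  | empty => simp [Matrix.zero_mulVec]
  | insert _ _ hA ih =>
    rw [Finset.sum_insert hA, Finset.sum_insert hA, Matrix.add_mulVec, ih]

lemma cone_engine (A : Fin m → Matrix (Fin n) (Fin n) ℝ)
    {K : Set (Fin n → ℝ)} (hK : IsProperCone K) (hinv : ∀ i, LeavesInvariant (A i) K)
    (k : ℕ) :
    ∃ c : ℝ, 0 < c ∧ ∀ (N : ℕ) (τ : Fin N → Fin m),
      l2OpNorm (kronPow (wordProd A τ) k) ≤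
        c * l2OpNorm ((∑ i, kronPow (A i) k) ^ N) := by
  classical
  obtain ⟨φ, c₀, hc₀, hφ⟩ := exists_pos_functional hK
  -- interior point and ball
  obtain ⟨u₀, hu₀⟩ := hK.2.2.2.1
  obtain ⟨ε, hε, hball⟩ := Metric.mem_nhds_iff.mp (mem_interior_iff_mem_nhds.mp hu₀)
  -- spanning family inside K
  set g : Fin (n+1) → (Fin n → ℝ) :=
    Fin.cons u₀ (fun i => u₀ + (ε/2) • (Pi.single i 1 : Fin n → ℝ)) with hg
  have hsingle_norm : ∀ i : Fin n, ‖(Pi.single i 1 : Fin n → ℝ)‖ ≤ 1 := by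
    intro i
    refine pi_norm_le_iff_of_nonneg zero_le_one |>.mpr fun j => ?_
    rw [Pi.single_apply]
    by_cases h : j = i <;> simp [h]
  have hgK : ∀ j, g j ∈ K := by
    intro j
    refine Fin.cases ?_ ?_ j
    · rw [hg, Fin.cons_zero]
      exact interior_subset hu₀
    · intro i
      rw [hg, Fin.cons_succ]
      apply hball
      rw [Metric.mem_ball, dist_self_add_left, norm_smul, Real.norm_eq_abs,
        abs_of_nonneg (by linarith : (0:ℝ) ≤ ε/2)]
      calc ε/2 * ‖(Pi.single i 1 : Fin n → ℝ)‖ ≤ ε/2 * 1 :=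
            mul_le_mul_of_nonneg_left (hsingle_norm i) (by linarith)
        _ < ε := by linarith
  have hgspan : ∀ w : Fin n → ℝ, w ∈ Submodule.span ℝ (Set.range g) := by
    have hsingle : ∀ i : Fin n, (Pi.single i 1 : Fin n → ℝ) ∈ Submodule.span ℝ (Set.range g) := by
      intro i
      have h1 : g i.succ - g 0 = (ε/2) • (Pi.single i 1 : Fin n → ℝ) := by
        rw [hg, Fin.cons_succ, Fin.cons_zero, add_sub_cancel_left]
      have h2 : (Pi.single i 1 : Fin n → ℝ) = (2/ε) • (g i.succ - g 0) := by
        rw [h1, smul_smul, show (2/ε) * (ε/2) = 1 from by field_simp, one_smul]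
      rw [h2]
      exact Submodule.smul_mem _ _ (Submodule.sub_mem _
        (Submodule.subset_span ⟨i.succ, rfl⟩) (Submodule.subset_span ⟨0, rfl⟩))
    intro w
    have hw : w = ∑ i : Fin n, w i • (Pi.single i 1 : Fin n → ℝ) := by
      conv_lhs => rw [← Finset.univ_sum_single w]
      refine Finset.sum_congr rfl fun p _ => ?_
      rw [← Pi.single_smul, smul_eq_mul, mul_one]
    rw [hw]
    exact Submodule.sum_mem _ fun i _ => Submodule.smul_mem _ _ (hsingle i)
  -- tensor generators and coordinates
  set gT : (Fin k → Fin (n+1)) → (Fin (n ^ k) → ℝ) :=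
    fun f => tensVec k (fun i => g (f i)) with hgT
  have hspanT := span_tensVec_top g hgspan k
  set L := (Fintype.linearCombination ℝ) gT with hL
  have hLrange : LinearMap.range L = ⊤ := by
    rw [hL, Fintype.range_linearCombination]
    exact hspanT
  obtain ⟨r, hr⟩ := L.exists_rightInverse_of_surjective hLrange
  set rC := LinearMap.toContinuousLinearMap r with hrC
  set Cb := ‖rC‖ with hCb
  have hCb0 : 0 ≤ Cb := norm_nonneg _
  have hrx : ∀ x : Fin (n ^ k) → ℝ, ∑ f, r x f • gT f = x := by
    intro x
    have h := LinearMap.congr_fun hr x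
    rw [LinearMap.comp_apply, LinearMap.id_apply] at h
    calc ∑ f, r x f • gT f = L (r x) :=
          (Fintype.linearCombination_apply ℝ gT (r x)).symm
      _ = x := h
  have hrbound : ∀ (x : Fin (n ^ k) → ℝ) f, |r x f| ≤ Cb * nrm x := by
    intro x f
    have h1 : ‖r x f‖ ≤ ‖r x‖ := norm_le_pi_norm (r x) f
    have h2 : r x = rC x := rfl
    have h3 : ‖rC x‖ ≤ Cb * ‖x‖ := rC.le_opNorm x
    rw [Real.norm_eq_abs] at h1
    calc |r x f| ≤ ‖r x‖ := h1
      _ = ‖rC x‖ := by rw [h2]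
      _ ≤ Cb * ‖x‖ := h3
      _ ≤ Cb * nrm x := mul_le_mul_of_nonneg_left (pinorm_le_nrm x) hCb0
  -- the tensor cone
  set genSet : Set (Fin (n ^ k) → ℝ) :=
    {y | ∃ v : Fin k → (Fin n → ℝ), (∀ i, v i ∈ K) ∧ y = tensVec k v} with hgen
  set C := AddSubmonoid.closure genSet with hC
  set ψ := tensVec k (fun _ : Fin k => φ) with hψ
  have hψle : ∀ y ∈ C, c₀ ^ k * nrm y ≤ dotp ψ y := by
    intro y hy
    induction hy using AddSubmonoid.closure_induction with
    | mem y hy =>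
      obtain ⟨v, hv, rfl⟩ := hy
      rw [hψ, dotp_tensVec, nrm_tensVec]
      calc c₀ ^ k * ∏ i, nrm (v i) = ∏ i : Fin k, (c₀ * nrm (v i)) := by
            rw [Finset.prod_mul_distrib, Finset.prod_const, Finset.card_univ,
              Fintype.card_fin]
        _ ≤ ∏ i, dotp φ (v i) :=
            Finset.prod_le_prod (fun i _ => mul_nonneg hc₀.le (nrm_nonneg _))
              (fun i _ => hφ _ (hv i))
    | zero => rw [nrm_zero, dotp_zero_right, mul_zero]
    | add y z hy hz ihy ihz =>
      rw [dotp_add_right]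
      calc c₀ ^ k * nrm (y + z) ≤ c₀ ^ k * (nrm y + nrm z) :=
            mul_le_mul_of_nonneg_left (nrm_add_le y z) (pow_nonneg hc₀.le k)
        _ = c₀ ^ k * nrm y + c₀ ^ k * nrm z := by ring
        _ ≤ dotp ψ y + dotp ψ z := add_le_add ihy ihz
  have hψ0 : ∀ y ∈ C, 0 ≤ dotp ψ y := fun y hy =>
    le_trans (mul_nonneg (pow_nonneg hc₀.le k) (nrm_nonneg y)) (hψle y hy)
  have hCinv : ∀ (M : Matrix (Fin n) (Fin n) ℝ), LeavesInvariant M K →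
      ∀ y ∈ C, (kronPow M k).mulVec y ∈ C := by
    intro M hM y hy
    induction hy using AddSubmonoid.closure_induction with
    | mem y hy =>
      obtain ⟨v, hv, rfl⟩ := hy
      rw [kronPow_mulVec_tensVec]
      exact AddSubmonoid.subset_closure ⟨fun i => M.mulVec (v i),
        fun i => hM _ (hv i), rfl⟩
    | zero => rw [Matrix.mulVec_zero]; exact AddSubmonoid.zero_mem _
    | add y z hy hz ihy ihz =>
      rw [Matrix.mulVec_add]
      exact AddSubmonoid.add_mem _ ihy ihz
  have hgTC : ∀ f, gT f ∈ C :=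
    fun f => AddSubmonoid.subset_closure ⟨fun i => g (f i), fun i => hgK _, rfl⟩
  -- the constants
  set Cψ := nrm ψ with hCψ
  set Cg := ∑ f : Fin k → Fin (n+1), nrm (gT f) with hCg
  have hCg0 : 0 ≤ Cg := Finset.sum_nonneg fun f _ => nrm_nonneg _
  have hCψ0 : 0 ≤ Cψ := nrm_nonneg _
  set c0k := c₀ ^ k with hc0k
  have hc0kpos : 0 < c0k := pow_pos hc₀ k
  set cb := Cb * Cψ * Cg * c0k⁻¹ with hcb
  have hcb0 : 0 ≤ cb :=
    mul_nonneg (mul_nonneg (mul_nonneg hCb0 hCψ0) hCg0) (inv_nonneg.mpr hc0kpos.le)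
  refine ⟨cb + 1, by linarith, ?_⟩
  intro N τ
  set Q := (∑ i, kronPow (A i) k) ^ N with hQdef
  set P := kronPow (wordProd A τ) k with hP
  have hQ0 : 0 ≤ l2OpNorm Q := l2OpNorm_nonneg _
  have hQsum : Q = ∑ σ : Fin N → Fin m, kronPow (wordProd A σ) k := by
    rw [hQdef, sum_pow_eq_sum_wordProd]
    exact Finset.sum_congr rfl fun σ _ => (kronPow_wordProd A k σ).symm
  have hkey : ∀ y ∈ C, dotp ψ (P.mulVec y) ≤ dotp ψ (Q.mulVec y) := by
    intro y hy
    rw [hQsum, sum_mulVec, dotp_sum_right]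
    exact Finset.single_le_sum
      (fun σ _ => hψ0 _ (hCinv _ (wordProd_leavesInvariant A hinv σ) y hy))
      (Finset.mem_univ τ)
  -- per-generator bound
  have hperf : ∀ f, nrm (P.mulVec (gT f)) ≤ (Cψ * l2OpNorm Q * c0k⁻¹) * nrm (gT f) := by
    intro f
    have h1 : c0k * nrm (P.mulVec (gT f)) ≤ dotp ψ (P.mulVec (gT f)) :=
      hψle _ (hCinv _ (wordProd_leavesInvariant A hinv τ) _ (hgTC f))
    have h2 : dotp ψ (P.mulVec (gT f)) ≤ dotp ψ (Q.mulVec (gT f)) := hkey _ (hgTC f)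
    have h3 : dotp ψ (Q.mulVec (gT f)) ≤ Cψ * nrm (Q.mulVec (gT f)) := dotp_le_nrm _ _
    have h4 : nrm (Q.mulVec (gT f)) ≤ l2OpNorm Q * nrm (gT f) := nrm_mulVec_le _ _
    have h5 : c0k * nrm (P.mulVec (gT f)) ≤ Cψ * (l2OpNorm Q * nrm (gT f)) := by
      calc c0k * nrm (P.mulVec (gT f)) ≤ dotp ψ (Q.mulVec (gT f)) := le_trans h1 h2
        _ ≤ Cψ * nrm (Q.mulVec (gT f)) := h3
        _ ≤ Cψ * (l2OpNorm Q * nrm (gT f)) := mul_le_mul_of_nonneg_left h4 hCψ0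
    calc nrm (P.mulVec (gT f)) = c0k⁻¹ * (c0k * nrm (P.mulVec (gT f))) := by
          rw [inv_mul_cancel_left₀ (ne_of_gt hc0kpos)]
      _ ≤ c0k⁻¹ * (Cψ * (l2OpNorm Q * nrm (gT f))) :=
          mul_le_mul_of_nonneg_left h5 (inv_nonneg.mpr hc0kpos.le)
      _ = (Cψ * l2OpNorm Q * c0k⁻¹) * nrm (gT f) := by ring
  refine l2OpNorm_le_bound (mul_nonneg (by linarith) hQ0) fun x => ?_
  have hlin : P.mulVec x = ∑ f, r x f • P.mulVec (gT f) := by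
    conv_lhs => rw [← hrx x]
    rw [← Matrix.mulVecLin_apply, map_sum]
    refine Finset.sum_congr rfl fun f _ => ?_
    rw [map_smul, Matrix.mulVecLin_apply]
  calc nrm (P.mulVec x) = nrm (∑ f, r x f • P.mulVec (gT f)) := by rw [hlin]
    _ ≤ ∑ f, nrm (r x f • P.mulVec (gT f)) := nrm_sum_le _ _
    _ = ∑ f, |r x f| * nrm (P.mulVec (gT f)) := by
        refine Finset.sum_congr rfl fun f _ => ?_
        rw [nrm_smul]
    _ ≤ ∑ f, (Cb * nrm x) * ((Cψ * l2OpNorm Q * c0k⁻¹) * nrm (gT f)) := by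
        refine Finset.sum_le_sum fun f _ => ?_
        exact mul_le_mul (hrbound x f) (hperf f) (nrm_nonneg _)
          (mul_nonneg hCb0 (nrm_nonneg _))
    _ = (Cb * nrm x) * ((Cψ * l2OpNorm Q * c0k⁻¹) * Cg) := by
        rw [← Finset.mul_sum]
        congr 1
        rw [← Finset.mul_sum]
    _ = cb * l2OpNorm Q * nrm x := by rw [hcb]; ring
    _ ≤ (cb + 1) * l2OpNorm Q * nrm x := by
        have := nrm_nonneg x
        nlinarith
end Engine


section Glue

open Filter

lemma rpow_pow_inv {C : ℝ} (hC : 0 ≤ C) {N : ℕ} (hN : 1 ≤ N) :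
    (C ^ N) ^ ((1 : ℝ)/(N : ℝ)) = C := by
  have hNne : (N : ℝ) ≠ 0 := Nat.cast_ne_zero.mpr (by omega)
  rw [← Real.rpow_natCast C N, ← Real.rpow_mul hC, mul_one_div, div_self hNne, Real.rpow_one]

lemma le_rpow_inv_of_pow_le {a b : ℝ} (ha : 0 ≤ a) {kk : ℕ} (hkk : 1 ≤ kk)
    (h : a ^ kk ≤ b) : a ≤ b ^ ((1 : ℝ)/(kk : ℝ)) := by
  have h0 : (0:ℝ) ≤ a ^ kk := pow_nonneg ha kk
  calc a = (a ^ kk) ^ ((1 : ℝ)/(kk : ℝ)) := (rpow_pow_inv ha hkk).symm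
    _ ≤ b ^ ((1 : ℝ)/(kk : ℝ)) := Real.rpow_le_rpow h0 h (by positivity)



/-- For matrices leaving a common proper cone invariant and `k ≥ 1`,
`(1/m)^{1/k} · ρ(∑ᵢ Aᵢ^{⊗k})^{1/k} ≤ ρ(A₁, …, Aₘ) ≤ ρ(∑ᵢ Aᵢ^{⊗k})^{1/k}`. -/
theorem jsr_kronPow_bounds_of_cone_invariant {n m : ℕ} (hm : 0 < m)
    (A : Fin m → Matrix (Fin n) (Fin n) ℝ)
    (K : Set (Fin n → ℝ)) (hK : IsProperCone K)
    (hinv : ∀ i, LeavesInvariant (A i) K) (k : ℕ) (hk : 1 ≤ k) :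
    ((1 : ℝ) / (m : ℝ)) ^ ((1 : ℝ) / (k : ℝ)) *
        specRad (∑ i, kronPow (A i) k) ^ ((1 : ℝ) / (k : ℝ)) ≤ jsr A ∧
      jsr A ≤ specRad (∑ i, kronPow (A i) k) ^ ((1 : ℝ) / (k : ℝ)) := by
  classical
  haveI : Nonempty (Fin m) := ⟨⟨0, hm⟩⟩
  set S := ∑ i, kronPow (A i) k with hS
  set u : ℕ → ℝ := fun N =>
    ⨆ σ : Fin N → Fin m, l2OpNorm (wordProd A σ) ^ ((1 : ℝ) / (N : ℝ)) with hu
  set v : ℕ → ℝ := fun N => l2OpNorm (S ^ N) ^ ((1 : ℝ) / (N : ℝ)) with hv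
  have hjsr : jsr A = Filter.atTop.limsup u := rfl
  have hspec : specRad S = Filter.atTop.limsup v := rfl
  have hkR : (0:ℝ) < (k:ℝ) := by exact_mod_cast Nat.lt_of_lt_of_le Nat.zero_lt_one hk
  -- uniform bounds
  set C0 : ℝ := 1 + ∑ i, l2OpNorm (A i) with hC0
  have hC0ge1 : 1 ≤ C0 := by
    rw [hC0]
    have : 0 ≤ ∑ i, l2OpNorm (A i) := Finset.sum_nonneg fun i _ => l2OpNorm_nonneg _
    linarith
  have hC00 : 0 ≤ C0 := by linarith
  have hAC0 : ∀ i, l2OpNorm (A i) ≤ C0 := by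
    intro i
    rw [hC0]
    have h1 : l2OpNorm (A i) ≤ ∑ j, l2OpNorm (A j) :=
      Finset.single_le_sum (fun j _ => l2OpNorm_nonneg _) (Finset.mem_univ i)
    linarith
  have hword : ∀ {N : ℕ} (σ : Fin N → Fin m), l2OpNorm (wordProd A σ) ≤ C0 ^ N := by
    intro N
    induction N with
    | zero => intro σ; rw [wordProd_nil, pow_zero]; exact l2OpNorm_one_le
    | succ N ih =>
      intro σ
      rw [← Fin.cons_self_tail σ, wordProd_cons, pow_succ]
      calc l2OpNorm (wordProd A (Fin.tail σ) * A (σ 0))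
          ≤ l2OpNorm (wordProd A (Fin.tail σ)) * l2OpNorm (A (σ 0)) := l2OpNorm_mul_le _ _
        _ ≤ C0 ^ N * C0 := mul_le_mul (ih _) (hAC0 _) (l2OpNorm_nonneg _) (pow_nonneg hC00 N)
  have hu0 : ∀ N, 0 ≤ u N := by
    intro N
    exact Real.iSup_nonneg fun σ => Real.rpow_nonneg (l2OpNorm_nonneg _) _
  have huC0 : ∀ N, u N ≤ C0 := by
    intro N
    rcases Nat.eq_zero_or_pos N with rfl | hN
    · refine ciSup_le fun σ => ?_
      rw [Nat.cast_zero, div_zero, Real.rpow_zero]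
      exact hC0ge1
    · refine ciSup_le fun σ => ?_
      calc l2OpNorm (wordProd A σ) ^ ((1:ℝ)/(N:ℝ))
          ≤ (C0 ^ N) ^ ((1:ℝ)/(N:ℝ)) :=
            Real.rpow_le_rpow (l2OpNorm_nonneg _) (hword σ) (by positivity)
        _ = C0 := rpow_pow_inv hC00 hN
  have hSpow : ∀ N : ℕ, l2OpNorm (S ^ N) ≤ (1 + l2OpNorm S) ^ N := by
    intro N
    induction N with
    | zero => rw [pow_zero, pow_zero]; exact l2OpNorm_one_le
    | succ N ih =>
      rw [pow_succ, pow_succ]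
      calc l2OpNorm (S ^ N * S) ≤ l2OpNorm (S ^ N) * l2OpNorm S := l2OpNorm_mul_le _ _
        _ ≤ (1 + l2OpNorm S) ^ N * (1 + l2OpNorm S) := by
            have h1 : 0 ≤ l2OpNorm S := l2OpNorm_nonneg _
            have h2 : 0 ≤ (1 + l2OpNorm S) ^ N :=
              pow_nonneg (by linarith) N
            exact mul_le_mul ih (by linarith) h1 h2
  have hv0 : ∀ N, 0 ≤ v N := fun N => Real.rpow_nonneg (l2OpNorm_nonneg _) _
  have hvC : ∀ N, v N ≤ 1 + l2OpNorm S := by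
    intro N
    have hCS : (0:ℝ) ≤ 1 + l2OpNorm S := by
      have := l2OpNorm_nonneg S; linarith
    rcases Nat.eq_zero_or_pos N with rfl | hN
    · rw [hv]
      simp only [Nat.cast_zero, div_zero, Real.rpow_zero]
      have := l2OpNorm_nonneg S; linarith
    · rw [hv]
      calc l2OpNorm (S ^ N) ^ ((1:ℝ)/(N:ℝ))
          ≤ ((1 + l2OpNorm S) ^ N) ^ ((1:ℝ)/(N:ℝ)) :=
            Real.rpow_le_rpow (l2OpNorm_nonneg _) (hSpow N) (by positivity)
        _ = 1 + l2OpNorm S := rpow_pow_inv hCS hN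
  -- filter boundedness facts
  have hub : IsBoundedUnder (· ≤ ·) atTop u := isBoundedUnder_of ⟨C0, fun N => huC0 N⟩
  have hub' : IsBoundedUnder (· ≥ ·) atTop u := isBoundedUnder_of ⟨0, fun N => hu0 N⟩
  have hucb : IsCoboundedUnder (· ≤ ·) atTop u := hub'.isCoboundedUnder_le
  have hvb : IsBoundedUnder (· ≤ ·) atTop v :=
    isBoundedUnder_of ⟨1 + l2OpNorm S, fun N => hvC N⟩
  have hvb' : IsBoundedUnder (· ≥ ·) atTop v := isBoundedUnder_of ⟨0, fun N => hv0 N⟩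
  have hvcb : IsCoboundedUnder (· ≤ ·) atTop v := hvb'.isCoboundedUnder_le
  have hJ0 : 0 ≤ Filter.atTop.limsup u :=
    le_limsup_of_frequently_le (Frequently.of_forall fun N => hu0 N) hub
  have hρ0 : 0 ≤ Filter.atTop.limsup v :=
    le_limsup_of_frequently_le (Frequently.of_forall fun N => hv0 N) hvb
  set J := Filter.atTop.limsup u with hJ
  set ρ := Filter.atTop.limsup v with hρ
  have hbdd : ∀ (N : ℕ), BddAbove (Set.range fun σ : Fin N → Fin m =>
      l2OpNorm (wordProd A σ) ^ ((1 : ℝ) / (N : ℝ))) :=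
    fun N => Set.Finite.bddAbove (Set.finite_range _)
  -- key termwise comparisons
  obtain ⟨c, hc, hcone⟩ := cone_engine A hK hinv k
  -- upper: words controlled by the sum matrix
  have hupper : ∀ {N : ℕ}, 1 ≤ N → ∀ σ : Fin N → Fin m,
      l2OpNorm (wordProd A σ) ^ ((1:ℝ)/(N:ℝ)) ≤
        (c ^ ((1:ℝ)/((N:ℝ)*(k:ℝ)))) * (v N) ^ ((1:ℝ)/(k:ℝ)) := by
    intro N hN σ
    have h1 : l2OpNorm (wordProd A σ) ^ k ≤ c * l2OpNorm (S ^ N) :=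
      le_trans (pow_le_l2OpNorm_kronPow _ k hk) (hcone N σ)
    have h2 : l2OpNorm (wordProd A σ) ≤ (c * l2OpNorm (S ^ N)) ^ ((1:ℝ)/(k:ℝ)) :=
      le_rpow_inv_of_pow_le (l2OpNorm_nonneg _) hk h1
    have h3 : l2OpNorm (wordProd A σ) ^ ((1:ℝ)/(N:ℝ)) ≤
        ((c * l2OpNorm (S ^ N)) ^ ((1:ℝ)/(k:ℝ))) ^ ((1:ℝ)/(N:ℝ)) :=
      Real.rpow_le_rpow (l2OpNorm_nonneg _) h2 (by positivity)
    refine le_trans h3 (le_of_eq ?_)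
    rw [← Real.rpow_mul (mul_nonneg hc.le (l2OpNorm_nonneg _)),
      Real.mul_rpow hc.le (l2OpNorm_nonneg _)]
    rw [hv]
    rw [← Real.rpow_mul (l2OpNorm_nonneg _)]
    congr 1
    · congr 1
      field_simp
    · congr 1
      field_simp
  -- lower: the sum matrix controlled by words
  have hlower : ∀ {N : ℕ}, 1 ≤ N → v N ≤ (m : ℝ) * (u N) ^ k := by
    intro N hN
    have hexp : ∀ σ : Fin N → Fin m, l2OpNorm (wordProd A σ) ≤ (u N) ^ N := by
      intro σ
      have h1 : l2OpNorm (wordProd A σ) ^ ((1:ℝ)/(N:ℝ)) ≤ u N :=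
        le_ciSup (hbdd N) σ
      calc l2OpNorm (wordProd A σ)
          = (l2OpNorm (wordProd A σ) ^ ((1:ℝ)/(N:ℝ))) ^ N := by
            rw [← Real.rpow_natCast (l2OpNorm (wordProd A σ) ^ ((1:ℝ)/(N:ℝ))) N,
              ← Real.rpow_mul (l2OpNorm_nonneg _)]
            rw [show (1:ℝ)/(N:ℝ) * (N:ℝ) = 1 from by
              field_simp]
            rw [Real.rpow_one]
        _ ≤ (u N) ^ N := pow_le_pow_left₀ (Real.rpow_nonneg (l2OpNorm_nonneg _) _) h1 N
    have hsum : l2OpNorm (S ^ N) ≤ (m:ℝ)^N * ((u N) ^ N) ^ k := by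
      have hexpand : S ^ N = ∑ σ : Fin N → Fin m, kronPow (wordProd A σ) k := by
        rw [hS, sum_pow_eq_sum_wordProd]
        exact Finset.sum_congr rfl fun σ _ => (kronPow_wordProd A k σ).symm
      have htri : l2OpNorm (S ^ N) ≤
          ∑ σ : Fin N → Fin m, l2OpNorm (kronPow (wordProd A σ) k) := by
        rw [hexpand]
        have : ∀ (s : Finset (Fin N → Fin m)),
            l2OpNorm (∑ σ ∈ s, kronPow (wordProd A σ) k) ≤
              ∑ σ ∈ s, l2OpNorm (kronPow (wordProd A σ) k) := by
          intro s
          induction s using Finset.induction with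
          | empty =>
            simp only [Finset.sum_empty]
            rw [l2OpNorm_zero]
          | insert _ _ hA ih =>
            rw [Finset.sum_insert hA, Finset.sum_insert hA]
            exact le_trans (l2OpNorm_add_le _ _) (by linarith)
        exact this Finset.univ
      calc l2OpNorm (S ^ N) ≤ ∑ σ : Fin N → Fin m, l2OpNorm (kronPow (wordProd A σ) k) := htri
        _ ≤ ∑ σ : Fin N → Fin m, ((u N) ^ N) ^ k := by
            refine Finset.sum_le_sum fun σ _ => ?_
            calc l2OpNorm (kronPow (wordProd A σ) k) ≤ l2OpNorm (wordProd A σ) ^ k :=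
                  l2OpNorm_kronPow_le _ k hk
              _ ≤ ((u N) ^ N) ^ k :=
                  pow_le_pow_left₀ (l2OpNorm_nonneg _) (hexp σ) k
        _ = (m:ℝ)^N * ((u N) ^ N) ^ k := by
            rw [Finset.sum_const, Finset.card_univ, Fintype.card_fun, Fintype.card_fin,
              Fintype.card_fin, nsmul_eq_mul]
            push_cast
            ring
    -- take N-th root
    have hv' : v N ≤ ((m:ℝ)^N * ((u N) ^ N) ^ k) ^ ((1:ℝ)/(N:ℝ)) := by
      rw [hv]
      exact Real.rpow_le_rpow (l2OpNorm_nonneg _) hsum (by positivity)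
    refine le_trans hv' (le_of_eq ?_)
    have hm0 : (0:ℝ) ≤ (m:ℝ) := Nat.cast_nonneg m
    have hu0' : (0:ℝ) ≤ u N := hu0 N
    rw [Real.mul_rpow (by positivity) (by positivity)]
    rw [rpow_pow_inv hm0 hN]
    congr 1
    rw [← pow_mul, ← Real.rpow_natCast (u N) (N * k), ← Real.rpow_mul hu0',
      ← Real.rpow_natCast (u N) k]
    congr 1
    push_cast
    have hNne : (N:ℝ) ≠ 0 := Nat.cast_ne_zero.mpr (by omega)
    field_simp
  constructor
  · -- lower bound on jsr
    rw [hjsr, hspec]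
    have key : ∀ t : ℝ, J < t → ((1:ℝ)/(m:ℝ)) ^ ((1:ℝ)/(k:ℝ)) * ρ ^ ((1:ℝ)/(k:ℝ)) ≤ t := by
      intro t ht
      have ht0 : 0 < t := lt_of_le_of_lt hJ0 ht
      have hev : ∀ᶠ N in atTop, u N < t := eventually_lt_of_limsup_lt ht hub
      have hev2 : ∀ᶠ N in atTop, v N ≤ (m:ℝ) * t ^ k := by
        filter_upwards [hev, eventually_ge_atTop 1] with N hN hN1
        calc v N ≤ (m:ℝ) * (u N) ^ k := hlower hN1
          _ ≤ (m:ℝ) * t ^ k := by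
              have h1 : (u N) ^ k ≤ t ^ k := pow_le_pow_left₀ (hu0 N) hN.le k
              exact mul_le_mul_of_nonneg_left h1 (Nat.cast_nonneg m)
      have hρle : ρ ≤ (m:ℝ) * t ^ k := limsup_le_of_le hvcb hev2
      have hmpos : (0:ℝ) < (m:ℝ) := Nat.cast_pos.mpr hm
      have h2 : ρ ^ ((1:ℝ)/(k:ℝ)) ≤ ((m:ℝ) * t ^ k) ^ ((1:ℝ)/(k:ℝ)) :=
        Real.rpow_le_rpow hρ0 hρle (by positivity)
      have h3 : ((m:ℝ) * t ^ k) ^ ((1:ℝ)/(k:ℝ)) =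
          (m:ℝ) ^ ((1:ℝ)/(k:ℝ)) * t := by
        rw [Real.mul_rpow hmpos.le (by positivity), rpow_pow_inv ht0.le hk]
      calc ((1:ℝ)/(m:ℝ)) ^ ((1:ℝ)/(k:ℝ)) * ρ ^ ((1:ℝ)/(k:ℝ))
          ≤ ((1:ℝ)/(m:ℝ)) ^ ((1:ℝ)/(k:ℝ)) * ((m:ℝ) ^ ((1:ℝ)/(k:ℝ)) * t) := by
            refine mul_le_mul_of_nonneg_left ?_ (Real.rpow_nonneg (by positivity) _)
            rw [← h3]; exact h2
        _ = (((1:ℝ)/(m:ℝ)) * (m:ℝ)) ^ ((1:ℝ)/(k:ℝ)) * t := by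
            rw [Real.mul_rpow (by positivity) hmpos.le]; ring
        _ = t := by
            rw [one_div_mul_cancel (ne_of_gt hmpos), Real.one_rpow, one_mul]
    exact le_of_forall_gt_imp_ge_of_dense key
  · -- upper bound on jsr
    rw [hjsr, hspec]
    have key : ∀ t : ℝ, ρ ^ ((1:ℝ)/(k:ℝ)) < t → J ≤ t := by
      intro t ht
      have hρk0 : 0 ≤ ρ ^ ((1:ℝ)/(k:ℝ)) := Real.rpow_nonneg hρ0 _
      set t' := (ρ ^ ((1:ℝ)/(k:ℝ)) + t) / 2 with ht'
      have ht'1 : ρ ^ ((1:ℝ)/(k:ℝ)) < t' := by rw [ht']; linarith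
      have ht'2 : t' < t := by rw [ht']; linarith
      have ht'0 : 0 < t' := lt_of_le_of_lt hρk0 ht'1
      have hs : ρ < t' ^ k := by
        have h1 : (ρ ^ ((1:ℝ)/(k:ℝ))) ^ k < t' ^ k := by
          refine pow_lt_pow_left₀ ht'1 hρk0 (by omega)
        have h2 : (ρ ^ ((1:ℝ)/(k:ℝ))) ^ k = ρ := by
          rw [← Real.rpow_natCast (ρ ^ ((1:ℝ)/(k:ℝ))) k, ← Real.rpow_mul hρ0]
          rw [show (1:ℝ)/(k:ℝ) * (k:ℝ) = 1 from by field_simp]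
          exact Real.rpow_one ρ
        rwa [h2] at h1
      have hev1 : ∀ᶠ N in atTop, v N < t' ^ k := eventually_lt_of_limsup_lt hs hvb
      -- the c-power factor tends to 1
      have htend : Filter.Tendsto (fun N : ℕ => c ^ ((1:ℝ)/((N:ℝ)*(k:ℝ)))) atTop (nhds 1) := by
        have h1 : Filter.Tendsto (fun N : ℕ => (1:ℝ)/((N:ℝ)*(k:ℝ))) atTop (nhds 0) := by
          have h2 : (fun N : ℕ => (1:ℝ)/((N:ℝ)*(k:ℝ))) =
              fun N : ℕ => ((1:ℝ)/(k:ℝ)) * ((1:ℝ)/(N:ℝ)) := by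
            funext N
            rw [div_mul_eq_div_div]
            ring
          rw [h2]
          have h3 := tendsto_one_div_atTop_nhds_zero_nat (𝕜 := ℝ)
          have h4 := h3.const_mul ((1:ℝ)/(k:ℝ))
          rwa [mul_zero] at h4
        have h5 : Filter.Tendsto (fun N : ℕ => Real.exp (Real.log c * ((1:ℝ)/((N:ℝ)*(k:ℝ)))))
            atTop (nhds 1) := by
          have h6 := (h1.const_mul (Real.log c))
          rw [mul_zero] at h6
          have h7 := (Real.continuous_exp.tendsto 0).comp h6
          rwa [Real.exp_zero] at h7
        refine h5.congr fun N => ?_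
        rw [Real.rpow_def_of_pos hc]
      have htt' : 1 < t / t' := by
        rw [lt_div_iff₀ ht'0]
        linarith
      have hev3 : ∀ᶠ N : ℕ in atTop, c ^ ((1:ℝ)/((N:ℝ)*(k:ℝ))) < t / t' :=
        htend.eventually_lt_const htt'
      have hev4 : ∀ᶠ N in atTop, u N ≤ t := by
        filter_upwards [hev1, hev3, eventually_ge_atTop 1] with N h1 h3 hN1
        refine ciSup_le fun σ => ?_
        calc l2OpNorm (wordProd A σ) ^ ((1:ℝ)/(N:ℝ))
            ≤ (c ^ ((1:ℝ)/((N:ℝ)*(k:ℝ)))) * (v N) ^ ((1:ℝ)/(k:ℝ)) := hupper hN1 σ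
          _ ≤ (t/t') * t' := by
              refine mul_le_mul h3.le ?_ (Real.rpow_nonneg (hv0 N) _)
                (by positivity)
              calc (v N) ^ ((1:ℝ)/(k:ℝ)) ≤ (t' ^ k) ^ ((1:ℝ)/(k:ℝ)) :=
                    Real.rpow_le_rpow (hv0 N) h1.le (by positivity)
                _ = t' := rpow_pow_inv ht'0.le hk
          _ = t := by field_simp
      exact limsup_le_of_le hucb hev4
    exact le_of_forall_gt_imp_ge_of_dense key

end Glue
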